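/- For any pairwise distinct i, j, k, l ∈ {1,…,9}, the map J_{i,j,k,l} on L_X is an involution: J_{i,j,k,l} ∘ J_{i,j,k,l} is the identity map of L_X. -/

import Mathlib

open Finset

/-- `L_X`: the free ℤ-module with basis `𝓔₀, 𝓔₁, …, 𝓔₉`. -/
abbrev LX : Type := Fin 10 → ℤ

noncomputable def basisX : Module.Basis (Fin 10) ℤ LX := Pi.basisFun ℤ (Fin 10)

/-- The basis vector `𝓔ₐ` of `L_X`. -/
noncomputable def EX (a : Fin 10) : LX := basisX a

/-- The symmetric bilinear form on `L_X` with `⟨𝓔₀,𝓔₀⟩ = 1`, `⟨𝓔ᵢ,𝓔ᵢ⟩ = -1` for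
`i = 1,…,9`, and `⟨𝓔ₐ,𝓔_b⟩ = 0` for `a ≠ b`. -/
noncomputable def formX : LX →ₗ[ℤ] LX →ₗ[ℤ] ℤ :=
  Matrix.toLinearMap₂' ℤ (Matrix.diagonal (fun a : Fin 10 => if a = 0 then (1 : ℤ) else -1))

/-- The anticanonical class `δ = 3𝓔₀ - 𝓔₁ - ⋯ - 𝓔₉`. -/
noncomputable def deltaX : LX := (3 : ℤ) • EX 0 - ∑ k ∈ ({0} : Finset (Fin 10))ᶜ, EX k

/-- The Kac translation `T_α(λ) = λ + ⟨δ,λ⟩α + (⟨δ,λ⟩ - ⟨α,λ⟩)δ` on `L_X`. -/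
noncomputable def kacX (α : LX) : LX →ₗ[ℤ] LX :=
  LinearMap.id + (formX deltaX).smulRight α + (formX deltaX - formX α).smulRight deltaX

/-- The involution action `J_{i,j,k,l}` on `L_X` (for pairwise distinct `i,j,k,l ∈ {1,…,9}`):
`J(𝓔₀) = 11𝓔₀ - 5(𝓔ᵢ+𝓔ⱼ+𝓔ₖ+𝓔ₗ) - 2Σ'𝓔ₘ`,
`J(𝓔ₐ) = 5𝓔₀ - 2(𝓔ᵢ+𝓔ⱼ+𝓔ₖ+𝓔ₗ) - 𝓔ₐ - Σ'𝓔ₘ` for `a ∈ {i,j,k,l}`,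
`J(𝓔ₘ) = 2𝓔₀ - (𝓔ᵢ+𝓔ⱼ+𝓔ₖ+𝓔ₗ) - 𝓔ₘ` otherwise,
where `Σ'` is the sum over `m ∈ {1,…,9} \ {i,j,k,l}`. -/
noncomputable def JX (i j k l : Fin 10) : LX →ₗ[ℤ] LX :=
  basisX.constr ℤ (fun a =>
    if a = 0 then
      (11 : ℤ) • EX 0 - (5 : ℤ) • (EX i + EX j + EX k + EX l)
        - (2 : ℤ) • ∑ m ∈ ({0, i, j, k, l} : Finset (Fin 10))ᶜ, EX m
    else if a = i ∨ a = j ∨ a = k ∨ a = l then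
      (5 : ℤ) • EX 0 - (2 : ℤ) • (EX i + EX j + EX k + EX l) - EX a
        - ∑ m ∈ ({0, i, j, k, l} : Finset (Fin 10))ᶜ, EX m
    else (2 : ℤ) • EX 0 - (EX i + EX j + EX k + EX l) - EX a)

set_option linter.unusedSectionVars false

section
variable (i j k l : Fin 10)

lemma JX_basis (a : Fin 10) : JX i j k l (EX a) =
    (if a = 0 then
      (11 : ℤ) • EX 0 - (5 : ℤ) • (EX i + EX j + EX k + EX l)
        - (2 : ℤ) • ∑ m ∈ ({0, i, j, k, l} : Finset (Fin 10))ᶜ, EX m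
    else if a = i ∨ a = j ∨ a = k ∨ a = l then
      (5 : ℤ) • EX 0 - (2 : ℤ) • (EX i + EX j + EX k + EX l) - EX a
        - ∑ m ∈ ({0, i, j, k, l} : Finset (Fin 10))ᶜ, EX m
    else (2 : ℤ) • EX 0 - (EX i + EX j + EX k + EX l) - EX a) :=
  basisX.constr_basis ℤ _ a

lemma JX_E0 : JX i j k l (EX 0) = (11:ℤ) • EX 0 - (5:ℤ) • (EX i + EX j + EX k + EX l)
    - (2:ℤ) • ∑ m ∈ ({0, i, j, k, l} : Finset (Fin 10))ᶜ, EX m := by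
  simp [JX_basis]

lemma JX_M (m : Fin 10) (hm : m ∈ ({0, i, j, k, l} : Finset (Fin 10))ᶜ) :
    JX i j k l (EX m) = (2:ℤ) • EX 0 - (EX i + EX j + EX k + EX l) - EX m := by
  simp only [mem_compl, mem_insert, mem_singleton, not_or] at hm
  obtain ⟨h0, hi', hj', hk', hl'⟩ := hm
  simp [JX_basis, h0, hi', hj', hk', hl']

lemma JX_I (a : Fin 10) (ha : a = i ∨ a = j ∨ a = k ∨ a = l) (h0 : a ≠ 0) :
    JX i j k l (EX a) = (5:ℤ) • EX 0 - (2:ℤ) • (EX i + EX j + EX k + EX l) - EX a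
      - ∑ m ∈ ({0, i, j, k, l} : Finset (Fin 10))ᶜ, EX m := by
  simp [JX_basis, h0, ha]

end

section
variable {i j k l : Fin 10}
variable (hi : i ≠ 0) (hj : j ≠ 0) (hk : k ≠ 0) (hl : l ≠ 0)
  (hij : i ≠ j) (hik : i ≠ k) (hil : i ≠ l) (hjk : j ≠ k) (hjl : j ≠ l) (hkl : k ≠ l)

include hi hj hk hl hij hik hil hjk hjl hkl

lemma card5 : (({0, i, j, k, l} : Finset (Fin 10))ᶜ).card = 5 := by
  rw [card_compl]
  rw [show ({0, i, j, k, l} : Finset (Fin 10)).card = 5 by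
    rw [card_insert_of_notMem (by simp [hi.symm, hj.symm, hk.symm, hl.symm]),
      card_insert_of_notMem (by simp [hij, hik, hil]),
      card_insert_of_notMem (by simp [hjk, hjl]),
      card_insert_of_notMem (by simp [hkl]), card_singleton]]
  rfl

lemma JX_E : JX i j k l (EX i + EX j + EX k + EX l) =
    (20:ℤ) • EX 0 - (9:ℤ) • (EX i + EX j + EX k + EX l)
      - (4:ℤ) • ∑ m ∈ ({0, i, j, k, l} : Finset (Fin 10))ᶜ, EX m := by
  rw [map_add, map_add, map_add, JX_I i j k l i (by tauto) hi,
    JX_I i j k l j (by tauto) hj, JX_I i j k l k (by tauto) hk, JX_I i j k l l (by tauto) hl]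
  module

lemma JX_S : JX i j k l (∑ m ∈ ({0, i, j, k, l} : Finset (Fin 10))ᶜ, EX m) =
    (10:ℤ) • EX 0 - (5:ℤ) • (EX i + EX j + EX k + EX l)
      - ∑ m ∈ ({0, i, j, k, l} : Finset (Fin 10))ᶜ, EX m := by
  rw [map_sum]
  rw [Finset.sum_congr rfl (fun m hm => JX_M i j k l m hm)]
  rw [Finset.sum_sub_distrib, Finset.sum_sub_distrib, Finset.sum_const, Finset.sum_const,
    card5 hi hj hk hl hij hik hil hjk hjl hkl]
  module

end

/-- `J_{i,j,k,l}` is an involution of `L_X`. -/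
theorem JX_involution (i j k l : Fin 10)
    (hi : i ≠ 0) (hj : j ≠ 0) (hk : k ≠ 0) (hl : l ≠ 0)
    (hij : i ≠ j) (hik : i ≠ k) (hil : i ≠ l) (hjk : j ≠ k) (hjl : j ≠ l) (hkl : k ≠ l) :
    JX i j k l ∘ₗ JX i j k l = LinearMap.id := by
  have hE := JX_E hi hj hk hl hij hik hil hjk hjl hkl
  have hS := JX_S hi hj hk hl hij hik hil hjk hjl hkl
  apply basisX.ext
  intro a
  rw [LinearMap.comp_apply, LinearMap.id_apply]
  show JX i j k l (JX i j k l (EX a)) = EX a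
  by_cases h0 : a = 0
  · subst h0
    rw [JX_E0, map_sub, map_sub, map_smul, map_smul, map_smul, JX_E0, hE, hS]
    module
  · by_cases ha : a = i ∨ a = j ∨ a = k ∨ a = l
    · rw [JX_I i j k l a ha h0, map_sub, map_sub, map_sub, map_smul, map_smul,
        JX_E0, hE, hS, JX_I i j k l a ha h0]
      module
    · have hm : a ∈ ({0, i, j, k, l} : Finset (Fin 10))ᶜ := by
        simp only [mem_compl, mem_insert, mem_singleton, not_or]
        tauto
      rw [JX_M i j k l a hm, map_sub, map_sub, map_smul, JX_E0, hE, JX_M i j k l a hm]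
      module
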